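/- arXiv:1005.1352 — 7 statements merged into one kernel-verified Lean document; each statement's English description precedes it below -/
import Mathlib

section
/- If two upper semi-continuous, block-decreasing functions $f$ and $g$ on $\mathbb{R}^d$ differ at a point $\m{x}$ in the interior of the support of both, then they differ on a set of positive Lebesgue measure. -/
open MeasureTheory Set

/-- The open box `∏ (xᵢ - ε, xᵢ)` lies in both `U` and `Iic x` once `ε` is below the radius of a
ball around `x` inside `U`. -/
theorem measure_inter_Iic_pos {ι : Type*} [Fintype ι] (μ : Measure (ι → ℝ)) [μ.IsOpenPosMeasure]
    {U : Set (ι → ℝ)} (hU : IsOpen U) {x : ι → ℝ} (hx : x ∈ U) :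
    0 < μ (U ∩ Iic x) := by
  obtain ⟨ε, hε, hball⟩ := Metric.isOpen_iff.mp hU x hx
  have hbox_open : IsOpen (univ.pi fun i => Ioo (x i - ε) (x i)) :=
    isOpen_set_pi finite_univ fun _ _ => isOpen_Ioo
  have hbox_nonempty : (univ.pi fun i => Ioo (x i - ε) (x i)).Nonempty :=
    ⟨fun i => x i - ε / 2, fun i _ => ⟨by linarith, by linarith⟩⟩
  have hbox_sub : (univ.pi fun i => Ioo (x i - ε) (x i)) ⊆ U ∩ Iic x := by
    intro y hy
    refine ⟨hball ?_, fun i => (hy i (mem_univ i)).2.le⟩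
    rw [ball_pi x hε]
    intro i _
    show y i ∈ Metric.ball (x i) ε
    rw [Real.ball_eq_Ioo]
    exact ⟨(hy i (mem_univ i)).1, by linarith [(hy i (mem_univ i)).2]⟩
  exact (hbox_open.measure_pos μ hbox_nonempty).trans_le (measure_mono hbox_sub)

/-- Upper semicontinuity keeps `f < g x` near `x`, and antitonicity keeps `g ≥ g x` below `x`. -/
theorem measure_ne_pos_of_lt {ι : Type*} [Fintype ι] (μ : Measure (ι → ℝ)) [μ.IsOpenPosMeasure]
    {f g : (ι → ℝ) → ℝ} (hf : UpperSemicontinuous f) (hg : Antitone g) {x : ι → ℝ}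
    (hlt : f x < g x) :
    0 < μ {y | f y ≠ g y} := by
  refine (measure_inter_Iic_pos μ (hf.isOpen_preimage (g x)) hlt).trans_le (measure_mono ?_)
  rintro y ⟨hfy, hyx⟩
  exact (lt_of_lt_of_le hfy (hg hyx)).ne

theorem stmt2_general (d : ℕ) (f g : (Fin d → ℝ) → ℝ)
    (hfusc : UpperSemicontinuous f) (hgusc : UpperSemicontinuous g)
    (hfdec : ∀ x y, x ≤ y → f y ≤ f x) (hgdec : ∀ x y, x ≤ y → g y ≤ g x)
    (x : Fin d → ℝ)
    (hne : f x ≠ g x) :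
    0 < volume {y | f y ≠ g y} := by
  rcases hne.lt_or_gt with hlt | hgt
  · exact measure_ne_pos_of_lt volume hfusc (fun _ _ h => hgdec _ _ h) hlt
  · simp_rw [ne_comm (a := f _)]
    exact measure_ne_pos_of_lt volume hgusc (fun _ _ h => hfdec _ _ h) hgt

/-- If two upper semi-continuous, block-decreasing functions `f, g` on `ℝ^d`
differ at a point in the interior of the support of both, then they differ on a set of
positive Lebesgue measure. -/
theorem stmt2 (d : ℕ) (f g : (Fin d → ℝ) → ℝ)
    (hf0 : ∀ x, 0 ≤ f x) (hg0 : ∀ x, 0 ≤ g x)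
    (hfusc : UpperSemicontinuous f) (hgusc : UpperSemicontinuous g)
    (hfdec : ∀ x y, x ≤ y → f y ≤ f x) (hgdec : ∀ x y, x ≤ y → g y ≤ g x)
    (x : Fin d → ℝ)
    (hxf : x ∈ interior (closure {y | f y ≠ 0}))
    (hxg : x ∈ interior (closure {y | g y ≠ 0}))
    (hne : f x ≠ g x) :
    0 < volume {y | f y ≠ g y} :=
  stmt2_general d f g hfusc hgusc hfdec hgdec x hne
end

section
/- The uniform density on the closed triangle in $\mathbb{R}_+^2$ with vertices $(0,0)$, $(0,1)$, $(1,0)$, i.e. $f(\m{x}) = 2\cdot\mathbf{1}[x_1+x_2\le 1, x_1,x_2\ge 0]$, is block-decreasing but satisfies $V_f[(1/8,1/8),(1/2,3/4)) = -2 < 0$; hence $f$ is not a scale mixture of uniforms density. -/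
/-!
For a scale mixture `f` with mixing measure `G`, each value `f x` is the integral of the
nonnegative kernel `(v₁ v₂)⁻¹` over the quadrant `Ici x`, which is `G`-integrable because the
kernel is bounded by `(x₁ x₂)⁻¹` there. Since the quadrants above `(y₁, x₂)` and `(x₁, y₂)`
intersect in the quadrant above `y`, inclusion–exclusion writes `V_f[x, y)` as an integral of
the kernel over a subset of `Ici x`, so it is nonnegative. The triangle density has
`V_f[(1/8,1/8),(1/2,3/4)) = 2 - 2 - 2 + 0 = -2`.
-/

open MeasureTheory Set

/-- The rectangle difference `V_f[x, y)`. -/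
def rectDiff (f : ℝ × ℝ → ℝ) (x y : ℝ × ℝ) : ℝ :=
  f x - f (y.1, x.2) - f (x.1, y.2) + f y

def IsScaleMixtureOfUniforms (f : ℝ × ℝ → ℝ) : Prop :=
  ∃ G : Measure (ℝ × ℝ), IsProbabilityMeasure G ∧
    G {v | ¬ (0 < v.1 ∧ 0 < v.2)} = 0 ∧
    ∀ p : ℝ × ℝ, 0 < p.1 → 0 < p.2 →
      f p = ∫ v in {v : ℝ × ℝ | p.1 ≤ v.1 ∧ p.2 ≤ v.2}, (v.1 * v.2)⁻¹ ∂G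

noncomputable def triangleDensity (p : ℝ × ℝ) : ℝ :=
  if 0 ≤ p.1 ∧ 0 ≤ p.2 ∧ p.1 + p.2 ≤ 1 then 2 else 0

theorem setIntegral_Ici_inclusion_exclusion_nonneg {α : Type*} [MeasurableSpace α]
    [SemilatticeSup α] [TopologicalSpace α] [ClosedIciTopology α] [OpensMeasurableSpace α]
    {μ : Measure α} {g : α → ℝ} {x a b : α} (hg : IntegrableOn g (Ici x) μ)
    (hg_nonneg : ∀ v ∈ Ici x, 0 ≤ g v) (hxa : x ≤ a) (hxb : x ≤ b) :
    0 ≤ (∫ v in Ici x, g v ∂μ) - (∫ v in Ici a, g v ∂μ) - (∫ v in Ici b, g v ∂μ) +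
      ∫ v in Ici (a ⊔ b), g v ∂μ := by
  have hAx : Ici a ⊆ Ici x := Ici_subset_Ici.mpr hxa
  have hBx : Ici b ⊆ Ici x := Ici_subset_Ici.mpr hxb
  have hx_split := integral_inter_add_sdiff (measurableSet_Ici (a := a)) hg
  have hb_split := integral_inter_add_sdiff (measurableSet_Ici (a := a)) (hg.mono_set hBx)
  rw [inter_eq_right.mpr hAx] at hx_split
  rw [inter_comm, Ici_inter_Ici] at hb_split
  have hmono : ∫ v in Ici b \ Ici a, g v ∂μ ≤ ∫ v in Ici x \ Ici a, g v ∂μ :=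
    setIntegral_mono_set (hg.mono_set sdiff_subset)
      (ae_restrict_of_forall_mem (measurableSet_Ici.diff measurableSet_Ici)
        fun v hv => hg_nonneg v hv.1)
      (sdiff_subset_sdiff_left hBx).eventuallyLE
  linarith

theorem integrableOn_inv_mul_Ici (G : Measure (ℝ × ℝ)) [IsFiniteMeasure G] {x : ℝ × ℝ}
    (hx₁ : 0 < x.1) (hx₂ : 0 < x.2) :
    IntegrableOn (fun v : ℝ × ℝ => (v.1 * v.2)⁻¹) (Ici x) G := by
  refine IntegrableOn.of_bound (measure_lt_top G _)
    (measurable_fst.mul measurable_snd).inv.aestronglyMeasurable (x.1 * x.2)⁻¹ ?_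
  filter_upwards [ae_restrict_mem measurableSet_Ici] with v ⟨hv₁, hv₂⟩
  have hv₁_pos : 0 < v.1 := hx₁.trans_le hv₁
  have hv₂_pos : 0 < v.2 := hx₂.trans_le hv₂
  rw [Real.norm_of_nonneg (by positivity)]
  gcongr

theorem IsScaleMixtureOfUniforms.rectDiff_nonneg {f : ℝ × ℝ → ℝ}
    (hf : IsScaleMixtureOfUniforms f) {x y : ℝ × ℝ} (hx₁ : 0 < x.1) (hx₂ : 0 < x.2)
    (hxy : x ≤ y) : 0 ≤ rectDiff f x y := by
  obtain ⟨G, _, -, hG⟩ := hf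
  have hy₁ : 0 < y.1 := hx₁.trans_le hxy.1
  have hy₂ : 0 < y.2 := hx₂.trans_le hxy.2
  have hsup : ((y.1, x.2) ⊔ (x.1, y.2) : ℝ × ℝ) = y := by
    simp [sup_eq_left.mpr hxy.1, sup_eq_right.mpr hxy.2]
  have key := setIntegral_Ici_inclusion_exclusion_nonneg (integrableOn_inv_mul_Ici G hx₁ hx₂)
    (fun v hv => inv_nonneg.mpr (mul_nonneg (hx₁.trans_le hv.1).le (hx₂.trans_le hv.2).le))
    (a := (y.1, x.2)) (b := (x.1, y.2)) ⟨hxy.1, le_rfl⟩ ⟨le_rfl, hxy.2⟩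
  rw [hsup] at key
  rwa [rectDiff, hG x hx₁ hx₂, hG (y.1, x.2) hy₁ hx₂, hG (x.1, y.2) hx₁ hy₂, hG y hy₁ hy₂]

theorem antitoneOn_triangleDensity : AntitoneOn triangleDensity (Ici 0) := by
  intro p hp q _ hpq
  unfold triangleDensity
  split_ifs with hq hp'
  · exact le_rfl
  · exact absurd ⟨hp.1, hp.2, by linarith [hq.2.2, hpq.1, hpq.2]⟩ hp'
  · norm_num
  · exact le_rfl

theorem rectDiff_triangleDensity : rectDiff triangleDensity (1/8, 1/8) (1/2, 3/4) = -2 := by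
  norm_num [rectDiff, triangleDensity]

/-- The uniform density `f(x) = 2·1[x₁+x₂ ≤ 1, x₁,x₂ ≥ 0]` on the triangle
with vertices `(0,0)`, `(0,1)`, `(1,0)` is block-decreasing on the positive quadrant, but
`V_f[(1/8,1/8),(1/2,3/4)) = -2 < 0`; hence `f` is not a scale mixture of uniforms density. -/
theorem stmt6 :
    ∀ f : ℝ × ℝ → ℝ,
      (f = fun p => if 0 ≤ p.1 ∧ 0 ≤ p.2 ∧ p.1 + p.2 ≤ 1 then 2 else 0) →
      -- block-decreasing on (0,∞)²
      ((∀ p q : ℝ × ℝ, 0 < p.1 → 0 < p.2 → p.1 ≤ q.1 → p.2 ≤ q.2 → f q ≤ f p) ∧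
      -- the alternating difference around [(1/8,1/8),(1/2,3/4)) equals -2 < 0
      (f (1/8, 1/8) - f (1/2, 1/8) - f (1/8, 3/4) + f (1/2, 3/4) = -2 ∧
        f (1/8, 1/8) - f (1/2, 1/8) - f (1/8, 3/4) + f (1/2, 3/4) < 0) ∧
      -- hence f is not a scale mixture of uniforms density
      ¬ ∃ G : Measure (ℝ × ℝ), IsProbabilityMeasure G ∧
          G {v | ¬ (0 < v.1 ∧ 0 < v.2)} = 0 ∧
          ∀ p : ℝ × ℝ, 0 < p.1 → 0 < p.2 →
            f p = ∫ v in {v : ℝ × ℝ | p.1 ≤ v.1 ∧ p.2 ≤ v.2}, (v.1 * v.2)⁻¹ ∂G) := by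
  intro f hf
  obtain rfl : f = triangleDensity := hf
  have hV := rectDiff_triangleDensity
  refine ⟨fun p q hp₁ hp₂ hpq₁ hpq₂ =>
      antitoneOn_triangleDensity ⟨hp₁.le, hp₂.le⟩ ⟨hp₁.le.trans hpq₁, hp₂.le.trans hpq₂⟩
        ⟨hpq₁, hpq₂⟩,
    ⟨hV, hV.trans_lt (by norm_num)⟩, fun hmix => ?_⟩
  have hle := IsScaleMixtureOfUniforms.rectDiff_nonneg hmix (x := (1/8, 1/8)) (y := (1/2, 3/4))
    (by norm_num) (by norm_num) (by norm_num [Prod.le_def])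
  linarith
end

section
/- If $f_G$ is a scale mixture of uniforms density with mixing probability measure $G$ on $(0,\infty)^d$, then for all $\m{x}\in(0,\infty)^d$, $G((\m{0},\m{x}]) = \int_{(\m{0},\m{x}]} (-1)^d V_{f_G}(\m{u},\m{x}]\; d\m{u}$, where the $V$-volume is taken with respect to the signed extension of the differences of $f_G$. -/
/-!
Writing `ν((u,x]) = ∫ 1{u < v ≤ x} (∏ vᵢ)⁻¹ dG(v)` and integrating over `u ∈ (0,x]`, Tonelli
lets us integrate in `u` first: for `v ∈ (0,x]` the set of admissible `u` is the open box `(0,v)`,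
of Lebesgue measure `∏ vᵢ`, which cancels the density and leaves `G((0,x])`.
-/

open MeasureTheory Set

section Box

variable {ι : Type*} [Fintype ι]

theorem measurableSet_setOf_mem_pi_Ioc (b : ι → ℝ) :
    MeasurableSet {p : (ι → ℝ) × (ι → ℝ) | p.2 ∈ univ.pi fun i => Ioc (p.1 i) (b i)} := by
  simp only [mem_univ_pi, mem_Ioc, ofPred_forall, ofPred_and]
  exact .iInter fun i => (measurableSet_lt (by fun_prop) (by fun_prop)).inter
    (measurableSet_le (by fun_prop) measurable_const)

theorem volume_setOf_mem_pi_Ioc_inter (a b v : ι → ℝ) :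
    volume ({u | v ∈ univ.pi fun i => Ioc (u i) (b i)} ∩ univ.pi fun i => Ioc (a i) (b i))
      = (univ.pi fun i => Ioc (a i) (b i)).indicator
          (fun v => ∏ i, ENNReal.ofReal (v i - a i)) v := by
  by_cases hv : v ∈ univ.pi fun i => Ioc (a i) (b i)
  · have hset : {u | v ∈ univ.pi fun i => Ioc (u i) (b i)} ∩ (univ.pi fun i => Ioc (a i) (b i))
        = univ.pi fun i => Ioo (a i) (v i) := by
      simp only [mem_univ_pi, mem_Ioc] at hv
      ext u
      simp only [mem_inter_iff, mem_ofPred_eq, mem_univ_pi, mem_Ioc, mem_Ioo]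
      exact ⟨fun h i => ⟨(h.2 i).1, (h.1 i).1⟩,
        fun h => ⟨fun i => ⟨(h i).2, (hv i).2⟩, fun i => ⟨(h i).1, (h i).2.le.trans (hv i).2⟩⟩⟩
    rw [hset, Real.volume_pi_Ioo, indicator_of_mem hv]
  · have hset : {u | v ∈ univ.pi fun i => Ioc (u i) (b i)} ∩ (univ.pi fun i => Ioc (a i) (b i))
        = ∅ := by
      refine eq_empty_of_forall_notMem fun u ⟨huv, hu⟩ => hv ?_
      simp only [mem_ofPred_eq, mem_univ_pi, mem_Ioc] at huv hu ⊢
      exact fun i => ⟨(hu i).1.trans (huv i).1, (huv i).2⟩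
    rw [hset, measure_empty, indicator_of_notMem hv]

theorem setLIntegral_withDensity_pi_Ioc (G : Measure (ι → ℝ)) [SFinite G]
    {f : (ι → ℝ) → ENNReal} (hf : Measurable f) (a b : ι → ℝ) :
    ∫⁻ u in univ.pi (fun i => Ioc (a i) (b i)), G.withDensity f (univ.pi fun i => Ioc (u i) (b i))
      = ∫⁻ v in univ.pi (fun i => Ioc (a i) (b i)), f v * ∏ i, ENNReal.ofReal (v i - a i) ∂G := by
  set S := univ.pi fun i => Ioc (a i) (b i)
  have hS : MeasurableSet S := .univ_pi fun _ => measurableSet_Ioc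
  have hR := measurableSet_setOf_mem_pi_Ioc b
  have hT (v : ι → ℝ) : MeasurableSet {u : ι → ℝ | v ∈ univ.pi fun i => Ioc (u i) (b i)} :=
    hR.preimage measurable_prodMk_right
  calc ∫⁻ u in S, G.withDensity f (univ.pi fun i => Ioc (u i) (b i))
      = ∫⁻ u in S, ∫⁻ v, (univ.pi fun i => Ioc (u i) (b i)).indicator f v ∂G := by
        refine lintegral_congr fun u => ?_
        have hbox : MeasurableSet (univ.pi fun i => Ioc (u i) (b i)) :=
          .univ_pi fun _ => measurableSet_Ioc
        rw [withDensity_apply _ hbox, lintegral_indicator hbox]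
    _ = ∫⁻ v, (∫⁻ u in S, {u | v ∈ univ.pi fun i => Ioc (u i) (b i)}.indicator
          (fun _ => f v) u) ∂G :=
        lintegral_lintegral_swap ((hf.comp measurable_snd).indicator hR).aemeasurable
    _ = ∫⁻ v, S.indicator (fun v => f v * ∏ i, ENNReal.ofReal (v i - a i)) v ∂G := by
        refine lintegral_congr fun v => ?_
        rw [lintegral_indicator_const (hT v), Measure.restrict_apply (hT v),
          volume_setOf_mem_pi_Ioc_inter, indicator_mul_right]
    _ = _ := lintegral_indicator hS _

end Box

theorem stmt10_general (d : ℕ) (G : Measure (Fin d → ℝ)) [IsProbabilityMeasure G]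
    (ν : Measure (Fin d → ℝ))
    (hν : ν = G.withDensity fun v => ENNReal.ofReal (∏ i, v i)⁻¹) :
    ∀ x : Fin d → ℝ, (∀ i, 0 < x i) →
      G {y | ∀ i, 0 < y i ∧ y i ≤ x i}
        = ∫⁻ u in {u : Fin d → ℝ | ∀ i, 0 < u i ∧ u i ≤ x i},
            ν {z | ∀ i, u i < z i ∧ z i ≤ x i} ∂volume := by
  intro x _
  subst hν
  have hbox (a : Fin d → ℝ) :
      {y : Fin d → ℝ | ∀ i, a i < y i ∧ y i ≤ x i} = univ.pi fun i => Ioc (a i) (x i) := by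
    ext; simp
  have hf : Measurable fun v : Fin d → ℝ => ENNReal.ofReal (∏ i, v i)⁻¹ := by fun_prop
  have hS : {y : Fin d → ℝ | ∀ i, 0 < y i ∧ y i ≤ x i}
      = univ.pi fun i => Ioc ((0 : Fin d → ℝ) i) (x i) := hbox 0
  simp only [hS, hbox]
  rw [setLIntegral_withDensity_pi_Ioc G hf 0 x, ← setLIntegral_one]
  refine (setLIntegral_congr_fun (.univ_pi fun _ => measurableSet_Ioc) fun v hvx => ?_).symm
  have hv : ∀ i, 0 < v i := fun i => (hvx i trivial).1
  have hprod : 0 < ∏ i, v i := Finset.prod_pos fun i _ => hv i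
  simp only [Pi.zero_apply, sub_zero]
  rw [← ENNReal.ofReal_prod_of_nonneg fun i _ => (hv i).le, ← ENNReal.ofReal_mul (by positivity),
    inv_mul_cancel₀ hprod.ne', ENNReal.ofReal_one]

/-- For a scale mixture of uniforms density with mixing probability
measure `G` on `(0,∞)^d`, letting `ν = (-1)^d V_{f_G}` be the non-negative Borel measure
with `ν(A) = ∫_A (v₁⋯v_d)⁻¹ dG(v)`, one has for all `x ∈ (0,∞)^d`:
`G((0,x]) = ∫_{(0,x]} ν((u,x]) du`. -/
theorem stmt10 (d : ℕ) (G : Measure (Fin d → ℝ)) [IsProbabilityMeasure G]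
    (hG : G {y | ¬ ∀ i, 0 < y i} = 0)
    (ν : Measure (Fin d → ℝ))
    (hν : ν = G.withDensity fun v => ENNReal.ofReal (∏ i, v i)⁻¹) :
    ∀ x : Fin d → ℝ, (∀ i, 0 < x i) →
      G {y | ∀ i, 0 < y i ∧ y i ≤ x i}
        = ∫⁻ u in {u : Fin d → ℝ | ∀ i, 0 < u i ∧ u i ≤ x i},
            ν {z | ∀ i, u i < z i ∧ z i ≤ x i} ∂volume :=
  stmt10_general d G ν hν
end

section
/- Any union (possibly uncountable) of defective rectangles in $\mathbb{R}^d$ is Lebesgue measurable. -/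
open MeasureTheory Set Metric Filter Topology ENNReal

/-- Any (possibly uncountable) union of defective rectangles in `ℝ^d` is
Lebesgue measurable, where a defective rectangle is a set `C` with
`(a₁,b₁)×⋯×(a_d,b_d) ⊆ C ⊆ [a₁,b₁]×⋯×[a_d,b_d]` for some `aᵢ < bᵢ`. -/
theorem stmt11 (d : ℕ) {ι : Type*} (C : ι → Set (Fin d → ℝ))
    (hC : ∀ j, ∃ a b : Fin d → ℝ, (∀ i, a i < b i) ∧
      (Set.pi Set.univ fun i => Ioo (a i) (b i)) ⊆ C j ∧
      C j ⊆ Set.pi Set.univ fun i => Icc (a i) (b i)) :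
    NullMeasurableSet (⋃ j, C j) volume := by
  choose a b hab hsub hsup using hC
  set U : Set (Fin d → ℝ) := ⋃ j, Set.pi Set.univ fun i => Ioo (a j i) (b j i) with hU
  have hUopen : IsOpen U := isOpen_iUnion fun j =>
    isOpen_set_pi finite_univ fun i _ => isOpen_Ioo
  have hUS : U ⊆ ⋃ j, C j := iUnion_mono fun j => hsub j
  have hnull : volume ((⋃ j, C j) \ U) = 0 := by
    have hae := Besicovitch.ae_tendsto_measure_inter_div_of_measurableSet volume
      hUopen.measurableSet
    rw [Filter.eventually_iff, mem_ae_iff] at hae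
    refine measure_mono_null ?_ hae
    intro x hx
    simp only [mem_compl_iff, mem_setOf_eq]
    intro htend
    obtain ⟨hxS, hxU⟩ := hx
    obtain ⟨j, hxj⟩ := mem_iUnion.1 hxS
    have hxIcc := hsup j hxj
    rcases Nat.eq_zero_or_pos d with hd | hd
    · exact hxU (mem_iUnion.2 ⟨j, fun i _ => absurd (Fin.pos i) (by omega)⟩)
    have hne : (Finset.univ : Finset (Fin d)).Nonempty := ⟨⟨0, hd⟩, Finset.mem_univ _⟩
    set ε : ℝ := Finset.univ.inf' hne fun i => b j i - a j i with hε
    have hεpos : 0 < ε := by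
      rw [hε, Finset.lt_inf'_iff]
      exact fun i _ => sub_pos.2 (hab j i)
    rw [indicator_of_notMem hxU] at htend
    have hlow : ∀ r : ℝ, r ∈ Ioc (0:ℝ) ε →
        ENNReal.ofReal ((1/2:ℝ)^d) ≤
          volume (U ∩ closedBall x r) / volume (closedBall x r) := by
      intro r hr
      obtain ⟨hr0, hrε⟩ := hr
      set c : Fin d → ℝ := fun i => max (a j i) (x i - r) with hc
      have hbox : (Set.pi Set.univ fun i => Ioo (c i) (c i + r)) ⊆ U ∩ closedBall x r := by
        intro y hy
        constructor
        · refine mem_iUnion.2 ⟨j, fun i _ => ?_⟩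
          have hyi := hy i (mem_univ i)
          have h1 : a j i ≤ c i := le_max_left _ _
          have h2 : c i + r ≤ b j i := by
            have hxb : x i ≤ b j i := (hxIcc i (mem_univ i)).2
            have har : a j i + r ≤ b j i := by
              have : r ≤ b j i - a j i := hrε.trans (Finset.inf'_le _ (Finset.mem_univ i))
              linarith
            have : c i = max (a j i) (x i - r) := rfl
            rw [this]
            rcases max_cases (a j i) (x i - r) with ⟨h,_⟩|⟨h,_⟩ <;> rw [h] <;> linarith
          exact ⟨lt_of_le_of_lt h1 hyi.1, lt_of_lt_of_le hyi.2 h2⟩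
        · rw [mem_closedBall, dist_pi_le_iff hr0.le]
          intro i
          have hyi := hy i (mem_univ i)
          have hcx : c i ≤ x i := max_le ((hxIcc i (mem_univ i)).1) (by linarith)
          have hcr : x i - r ≤ c i := le_max_right _ _
          rw [Real.dist_eq, abs_le]
          constructor <;> nlinarith [hyi.1, hyi.2]
      have hvol : volume (Set.pi Set.univ fun i => Ioo (c i) (c i + r)) =
          ENNReal.ofReal (r ^ d) := by
        rw [Real.volume_pi_Ioo]
        simp [ENNReal.ofReal_pow hr0.le]
      have hball : volume (closedBall x r) = ENNReal.ofReal ((2*r)^d) := by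
        simpa using Real.volume_pi_closedBall x hr0.le
      calc ENNReal.ofReal ((1/2:ℝ)^d)
          = ENNReal.ofReal (r^d) / ENNReal.ofReal ((2*r)^d) := by
            rw [← ENNReal.ofReal_div_of_pos (by positivity)]
            congr 1
            rw [← div_pow]
            congr 1
            field_simp
        _ ≤ volume (U ∩ closedBall x r) / volume (closedBall x r) := by
            rw [hball]
            exact ENNReal.div_le_div ((hvol ▸ measure_mono hbox)) le_rfl
    have hpos : (0:ℝ≥0∞) < ENNReal.ofReal ((1/2:ℝ)^d) := by positivity
    have hev1 : ∀ᶠ r in 𝓝[>] (0:ℝ),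
        volume (U ∩ closedBall x r) / volume (closedBall x r)
          < ENNReal.ofReal ((1/2:ℝ)^d) :=
      htend.eventually_lt_const hpos
    have hev2 : ∀ᶠ r in 𝓝[>] (0:ℝ), r ∈ Ioc (0:ℝ) ε :=
      Ioc_mem_nhdsGT_of_mem ⟨le_rfl, hεpos⟩
    obtain ⟨r, h1, h2⟩ := (hev1.and hev2).exists
    exact absurd (hlow r h2) (not_le.2 h1)
  have : (⋃ j, C j) = U ∪ ((⋃ j, C j) \ U) := (union_diff_cancel hUS).symm
  rw [this]
  exact hUopen.measurableSet.nullMeasurableSet.union (NullMeasurableSet.of_null hnull)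
end

section
/- Every real-valued, non-negative function $f$ on $(0,\infty)^d$ that is non-increasing in each coordinate (with other coordinates fixed) and tends to zero as each coordinate tends to $\infty$ is Lebesgue measurable. -/
/-!
On the orthant, the superlevel set `{f ≥ c}` of a coordinatewise non-increasing `f` is the
trace of its own lower closure. Lower sets of `ℝ^d` have Lebesgue-null frontier, so they are
null-measurable, and hence so are all superlevel sets of `f`.
-/

open MeasureTheory Set Filter Topology

theorem AntitoneOn.lowerClosure_preimage_Ici_inter {α β : Type*} [Preorder α] [Preorder β]
    {f : α → β} {s : Set α} (hf : AntitoneOn f s) (c : β) :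
    ↑(lowerClosure (f ⁻¹' Ici c ∩ s)) ∩ s = f ⁻¹' Ici c ∩ s := by
  refine Subset.antisymm ?_ fun x hx => ⟨subset_lowerClosure hx, hx.2⟩
  rintro x ⟨⟨y, ⟨hcy, hy⟩, hxy⟩, hx⟩
  exact ⟨le_trans hcy (hf hx hy hxy), hx⟩

theorem AntitoneOn.nullMeasurable_restrict {ι β : Type*} [Fintype ι] [LinearOrder β]
    [TopologicalSpace β] [OrderTopology β] [SecondCountableTopology β] [MeasurableSpace β]
    [BorelSpace β] {f : (ι → ℝ) → β} {s : Set (ι → ℝ)} (hs : NullMeasurableSet s)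
    (hf : AntitoneOn f s) : NullMeasurable f (volume.restrict s) := by
  refine measurable_of_Ici fun c => ?_
  show NullMeasurableSet (f ⁻¹' Ici c) (volume.restrict s)
  rw [nullMeasurableSet_restrict hs, ← hf.lowerClosure_preimage_Ici_inter]
  exact (lowerClosure _).lower.ordConnected.nullMeasurableSet.inter hs

theorem stmt12_general (d : ℕ) (f : (Fin d → ℝ) → ℝ)
    (hdec : ∀ x y : Fin d → ℝ, (∀ i, 0 < x i) → x ≤ y → f y ≤ f x) :
    NullMeasurable f (volume.restrict {x : Fin d → ℝ | ∀ i, 0 < x i}) := by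
  have horthant : MeasurableSet {x : Fin d → ℝ | ∀ i, 0 < x i} := by
    simpa only [ofPred_forall] using
      MeasurableSet.iInter fun i => measurableSet_lt measurable_const (measurable_pi_apply i)
  exact AntitoneOn.nullMeasurable_restrict horthant.nullMeasurableSet
    fun x hx _ _ hxy => hdec x _ hx hxy

/-- Every non-negative function on `(0,∞)^d` that is non-increasing in
each coordinate and tends to zero as each coordinate tends to `∞` is Lebesgue measurable
(i.e. null-measurable with respect to Lebesgue measure on the orthant). -/
theorem stmt12 (d : ℕ) (f : (Fin d → ℝ) → ℝ)
    (hnonneg : ∀ x : Fin d → ℝ, (∀ i, 0 < x i) → 0 ≤ f x)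
    (hdec : ∀ x y : Fin d → ℝ, (∀ i, 0 < x i) → x ≤ y → f y ≤ f x)
    (hvanish : ∀ x : Fin d → ℝ, (∀ i, 0 < x i) → ∀ i : Fin d,
      Tendsto (fun t => f (Function.update x i t)) atTop (𝓝 0)) :
    NullMeasurable f (volume.restrict {x : Fin d → ℝ | ∀ i, 0 < x i}) :=
  stmt12_general d f hdec
end

section
/- There exists a bounded, non-negative, block-decreasing function on $(0,\infty)^2$ vanishing at infinity in each coordinate that is not Borel measurable. -/
open MeasureTheory Set Filter Topology Cardinal

lemma aux_card_measurable : #{ t : Set ℝ | MeasurableSet t } ≤ 𝔠 := by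
  have h : Real.measurableSpace = .generateFrom (range (Iio : ℝ → Set ℝ)) := by
    rw [BorelSpace.measurable_eq (α := ℝ), borel_eq_generateFrom_Iio]
  rw [h]
  exact MeasurableSpace.cardinal_measurableSet_le_continuum
    ((mk_range_le).trans (by rw [Cardinal.mk_real]))

lemma aux_exists_nonmeas : ∃ S : Set ℝ, S ⊆ Ioo 0 1 ∧ ¬ MeasurableSet S := by
  by_contra h
  push_neg at h
  have hsub : (𝒫 (Ioo (0:ℝ) 1) : Set (Set ℝ)) ⊆ { t : Set ℝ | MeasurableSet t } := by
    intro S hS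
    exact h S hS
  have h1 : #(𝒫 (Ioo (0:ℝ) 1) : Set (Set ℝ)) ≤ 𝔠 :=
    (mk_le_mk_of_subset hsub).trans aux_card_measurable
  rw [mk_powerset, Cardinal.mk_Ioo_real (by norm_num)] at h1
  exact absurd h1 (not_le.mpr (Cardinal.cantor 𝔠))

open Classical in
/-- There exists a bounded, non-negative, block-decreasing function on
`(0,∞)²` vanishing at infinity in each coordinate that is not Borel measurable. -/
theorem stmt13 :
    ∃ f : ℝ × ℝ → ℝ,
      (∃ M : ℝ, ∀ p, f p ≤ M) ∧
      (∀ p, 0 ≤ f p) ∧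
      (∀ p : ℝ × ℝ, ¬ (0 < p.1 ∧ 0 < p.2) → f p = 0) ∧
      (∀ p q : ℝ × ℝ, 0 < p.1 → 0 < p.2 → p.1 ≤ q.1 → p.2 ≤ q.2 → f q ≤ f p) ∧
      (∀ p : ℝ × ℝ, 0 < p.1 → 0 < p.2 →
        Tendsto (fun t => f (t, p.2)) atTop (𝓝 0) ∧
        Tendsto (fun t => f (p.1, t)) atTop (𝓝 0)) ∧
      ¬ Measurable f := by
  obtain ⟨S, hS01, hSnm⟩ := aux_exists_nonmeas
  set P : ℝ × ℝ → Prop := fun p => ∃ x ∈ S, 0 < p.1 ∧ p.1 ≤ x ∧ 0 < p.2 ∧ p.2 ≤ 1 - x with hP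
  refine ⟨fun p => if P p then 1 else 0, ⟨1, fun p => ?_⟩, fun p => ?_, fun p hp => ?_,
    fun p q hp1 hp2 h1 h2 => ?_, fun p hp1 hp2 => ?_, ?_⟩
  · dsimp only
    split <;> norm_num
  · dsimp only
    split <;> norm_num
  · dsimp only
    rw [if_neg]
    rintro ⟨x, _, hx1, _, hx2, _⟩
    exact hp ⟨hx1, hx2⟩
  · dsimp only
    by_cases hq : P q
    · rw [if_pos hq, if_pos]
      obtain ⟨x, hxS, _, hx1, _, hx2⟩ := hq
      exact ⟨x, hxS, hp1, h1.trans hx1, hp2, h2.trans hx2⟩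
    · rw [if_neg hq]
      split <;> norm_num
  · dsimp only
    constructor
    · refine tendsto_const_nhds.congr' ?_
      filter_upwards [eventually_ge_atTop (1:ℝ)] with t ht
      rw [eq_comm, if_neg]
      rintro ⟨x, hxS, _, hx1, _, _⟩
      exact absurd (hx1.trans_lt (hS01 hxS).2) (not_lt.mpr ht)
    · refine tendsto_const_nhds.congr' ?_
      filter_upwards [eventually_ge_atTop (1:ℝ)] with t ht
      rw [eq_comm, if_neg]
      rintro ⟨x, hxS, _, _, _, hx2⟩
      have := (hS01 hxS).1
      linarith
  · intro hf
    have hg : Measurable fun x : ℝ => ((x, 1 - x) : ℝ × ℝ) :=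
      (continuous_id.prodMk (continuous_const.sub continuous_id)).measurable
    have hm : MeasurableSet ((fun x : ℝ => (if P (x, 1 - x) then (1:ℝ) else 0)) ⁻¹' {1}) :=
      (hf.comp hg) (measurableSet_singleton 1)
    have heq : ((fun x : ℝ => (if P (x, 1 - x) then (1:ℝ) else 0)) ⁻¹' {1}) = S := by
      ext x
      simp only [mem_preimage, mem_singleton_iff]
      constructor
      · intro hx
        by_cases hPx : P (x, 1 - x)
        · obtain ⟨y, hyS, _, hy1, _, hy2⟩ := hPx
          have : y ≤ x := by simp only at hy2; linarith
          have : x = y := le_antisymm hy1 this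
          rwa [this]
        · rw [if_neg hPx] at hx; norm_num at hx
      · intro hx
        rw [if_pos]
        exact ⟨x, hx, (hS01 hx).1, le_refl _, by simp [(hS01 hx).2], by simp⟩
    rw [heq] at hm
    exact hSnm hm
end

section
/- Let $A$ be a non-Borel subset of the open segment $\Delta = \{(x,1-x): 0<x<1\}\subset\mathbb{R}^2$ and define $\tilde A = \bigcup_{(x,y)\in A} (0,x]\times(0,y]$. Then $\Delta\cap\tilde A = A$, and consequently $\tilde A$ is not a Borel subset of $\mathbb{R}^2$. -/
/-!
Every point `p` of the segment lies in its own box `(0, p.1] × (0, p.2]`, while a box over a point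
`q` of the segment meets the segment only in `q`, since the segment is an antichain for the
coordinatewise order. Hence the segment cuts `Ã` back down to `A`, and since the segment is Borel,
Borel measurability of `Ã` would force that of `A`.
-/

open MeasureTheory Set

theorem isAntichain_setOf_fst_add_snd_eq {α : Type*} [AddCommMonoid α] [PartialOrder α]
    [IsOrderedCancelAddMonoid α] (c : α) :
    IsAntichain (· ≤ ·) {p : α × α | p.1 + p.2 = c} := by
  intro p hp q hq hne hpq
  have hsum : p.1 + p.2 = q.1 + q.2 := hp.trans hq.symm
  obtain ⟨h₁, h₂⟩ := (add_eq_add_iff_eq_and_eq hpq.1 hpq.2).1 hsum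
  exact hne (Prod.ext h₁ h₂)

theorem inter_biUnion_Ioc_prod_eq {α β : Type*} [PartialOrder α] [PartialOrder β] (a : α) (b : β)
    {D A : Set (α × β)} (hD : IsAntichain (· ≤ ·) D) (hA : A ⊆ D)
    (hlt : ∀ p ∈ A, a < p.1 ∧ b < p.2) :
    D ∩ ⋃ q ∈ A, Ioc a q.1 ×ˢ Ioc b q.2 = A := by
  ext p
  simp only [mem_inter_iff, mem_iUnion, mem_prod, mem_Ioc, exists_prop]
  constructor
  · rintro ⟨hpD, q, hqA, ⟨-, hp₁⟩, ⟨-, hp₂⟩⟩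
    rwa [hD.eq hpD (hA hqA) ⟨hp₁, hp₂⟩]
  · intro hpA
    exact ⟨hA hpA, p, hpA, ⟨(hlt p hpA).1, le_rfl⟩, ⟨(hlt p hpA).2, le_rfl⟩⟩

theorem measurableSet_openSegment_antidiagonal :
    MeasurableSet {p : ℝ × ℝ | 0 < p.1 ∧ p.1 < 1 ∧ p.2 = 1 - p.1} :=
  (measurableSet_lt measurable_const measurable_fst).inter <|
    (measurableSet_lt measurable_fst measurable_const).inter <|
      measurableSet_eq_fun measurable_snd (measurable_const.sub measurable_fst)

/-- For a non-Borel subset `A` of the open anti-diagonal segment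
`Δ = {(x,1-x) : 0<x<1}` and `Ã = ⋃_{(x,y)∈A} (0,x]×(0,y]`, one has `Δ ∩ Ã = A`,
and consequently `Ã` is not a Borel subset of `ℝ²`. -/
theorem stmt14 (A : Set (ℝ × ℝ))
    (hA : A ⊆ {p : ℝ × ℝ | 0 < p.1 ∧ p.1 < 1 ∧ p.2 = 1 - p.1})
    (hnb : ¬ MeasurableSet A) :
    {p : ℝ × ℝ | 0 < p.1 ∧ p.1 < 1 ∧ p.2 = 1 - p.1} ∩
        (⋃ q ∈ A, Ioc (0:ℝ) q.1 ×ˢ Ioc (0:ℝ) q.2) = A ∧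
    ¬ MeasurableSet (⋃ q ∈ A, Ioc (0:ℝ) q.1 ×ˢ Ioc (0:ℝ) q.2) := by
  have hΔ : IsAntichain (· ≤ ·) {p : ℝ × ℝ | 0 < p.1 ∧ p.1 < 1 ∧ p.2 = 1 - p.1} :=
    (isAntichain_setOf_fst_add_snd_eq 1).subset fun p ⟨_, _, hp⟩ => by
      simp only [mem_ofPred_eq, hp]; ring
  have key := inter_biUnion_Ioc_prod_eq 0 0 hΔ hA fun p hp => by
    obtain ⟨h₀, h₁, h₂⟩ := hA hp
    exact ⟨h₀, by linarith⟩
  refine ⟨key, fun hm => hnb ?_⟩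
  rw [← key]
  exact measurableSet_openSegment_antidiagonal.inter hm
end
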